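/- In the quotient 𝒦' = Ω_A/dA with A = ℂ[s,s⁻¹,t,t⁻¹], the subspace 𝒦 spanned by elements overline{b da} with a ∈ A_k, b ∈ A_ℓ and k + ℓ ≡ 0 (mod r) (where A_j = s^j ℂ[t,t⁻¹]) contains all elements s^{j−1}t^m ds, s^j t⁻¹ dt for j ≡ 0 (mod r), m ∈ ℤ, and in particular s⁻¹ds ∈ 𝒦. -/
import Mathlib


open LaurentPolynomial

noncomputable section

abbrev A2 : Type := LaurentPolynomial (LaurentPolynomial ℂ)

def ss (k : ℤ) : A2 := LaurentPolynomial.T k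
def tt (m : ℤ) : A2 := LaurentPolynomial.C (LaurentPolynomial.T m)

abbrev Ω2 := KaehlerDifferential ℂ A2

def dA : Submodule ℂ Ω2 := Submodule.span ℂ (Set.range (KaehlerDifferential.D ℂ A2))

abbrev Kq := Ω2 ⧸ dA

def mkK : Ω2 →ₗ[ℂ] Kq := dA.mkQ

/-- The graded piece `A_j = s^j ℂ[t,t⁻¹]` of `A = ℂ[s,s⁻¹,t,t⁻¹]`. -/
def Aj (j : ℤ) : Submodule ℂ A2 := Submodule.span ℂ {a | ∃ m : ℤ, a = ss j * tt m}

/-- `𝒦 = span_ℂ{overline{b da} : a ∈ A_k, b ∈ A_ℓ, k+ℓ ≡ 0 mod r}`. -/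
def Ksub (r : ℕ) : Submodule ℂ Kq :=
  Submodule.span ℂ {κ | ∃ (k l : ℤ) (a b : A2), (r : ℤ) ∣ (k + l) ∧ a ∈ Aj k ∧ b ∈ Aj l ∧
    κ = mkK (b • KaehlerDifferential.D ℂ A2 a)}


lemma mem_Aj (j m : ℤ) : ss j * tt m ∈ Aj j :=
  Submodule.subset_span ⟨m, rfl⟩

lemma ss_mem_Aj (j : ℤ) : ss j ∈ Aj j := by
  have := mem_Aj j 0
  simpa [tt, ss, LaurentPolynomial.T_zero, map_one] using this

lemma tt_mem_Aj0 (m : ℤ) : tt m ∈ Aj 0 := by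
  have := mem_Aj 0 m
  simpa [ss, LaurentPolynomial.T_zero] using this

theorem stmt9 (r : ℕ) (hr : 0 < r) :
    (∀ j m : ℤ, (r : ℤ) ∣ j →
      mkK ((ss (j - 1) * tt m) • KaehlerDifferential.D ℂ A2 (ss 1)) ∈ Ksub r) ∧
    (∀ j : ℤ, (r : ℤ) ∣ j →
      mkK ((ss j * tt (-1)) • KaehlerDifferential.D ℂ A2 (tt 1)) ∈ Ksub r) ∧
    mkK (ss (-1) • KaehlerDifferential.D ℂ A2 (ss 1)) ∈ Ksub r := by
  refine ⟨fun j m hj => ?_, fun j hj => ?_, ?_⟩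
  · exact Submodule.subset_span ⟨1, j - 1, ss 1, ss (j - 1) * tt m,
      by simpa [add_comm] using hj, ss_mem_Aj 1, mem_Aj (j - 1) m, rfl⟩
  · exact Submodule.subset_span ⟨0, j, tt 1, ss j * tt (-1),
      by simpa using hj, tt_mem_Aj0 1, mem_Aj j (-1), rfl⟩
  · exact Submodule.subset_span ⟨1, -1, ss 1, ss (-1),
      by simp, ss_mem_Aj 1, ss_mem_Aj (-1), rfl⟩
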